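/- arXiv:0912.4900 — 8 statements merged into one kernel-verified Lean document; each statement's English description precedes it below -/
import Mathlib

section
/- The function μ(t) = (λ·cos(ωt)·sinh(λt) + ω·sin(ωt)·cosh(λt)) / ((ω² + λ²)·cosh(λt)) satisfies μ'' + (ω² + 2λ²/cosh²(λt))·μ = 0 for all real t. -/
/-! μ is the constant multiple (ω² + λ²)⁻¹ of f(t) = λ cos(ωt) tanh(λt) + ω sin(ωt), the real part
of the Jost solution (λ tanh(λt) − iω) e^{iωt} of the reflectionless Pöschl–Teller potential.
Writing T = tanh(λt), one has T' = λ(1 − T²) and 1/cosh²(λt) = 1 − T², so checking the equation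
for f is a polynomial identity in cos(ωt), sin(ωt) and T; it passes to μ because the derivative
commutes with multiplication by a constant. -/

open Real

theorem Real.one_sub_tanh_sq (x : ℝ) : 1 - tanh x ^ 2 = 1 / cosh x ^ 2 := by
  have hc := (cosh_pos x).ne'
  rw [tanh_eq_sinh_div_cosh]
  field_simp
  linear_combination cosh_sq_sub_sinh_sq x

theorem Real.hasDerivAt_tanh (x : ℝ) : HasDerivAt tanh (1 - tanh x ^ 2) x := by
  have hc := (cosh_pos x).ne'
  rw [funext tanh_eq_sinh_div_cosh]
  refine ((hasDerivAt_sinh x).div (hasDerivAt_cosh x) hc).congr_deriv ?_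
  beta_reduce
  field_simp

theorem HasDerivAt.tanh {f : ℝ → ℝ} {f' x : ℝ} (hf : HasDerivAt f f' x) :
    HasDerivAt (fun y => Real.tanh (f y)) ((1 - Real.tanh (f x) ^ 2) * f') x :=
  (hasDerivAt_tanh (f x)).comp x hf

section PoschlTeller

variable (lam om : ℝ)

noncomputable def poschlTellerSol (t : ℝ) : ℝ :=
  lam * cos (om * t) * tanh (lam * t) + om * sin (om * t)

noncomputable def poschlTellerSolDeriv (t : ℝ) : ℝ :=
  om ^ 2 * cos (om * t) - lam * om * sin (om * t) * tanh (lam * t)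
    + lam ^ 2 * cos (om * t) * (1 - tanh (lam * t) ^ 2)

variable {lam om}

theorem hasDerivAt_poschlTellerSol (t : ℝ) :
    HasDerivAt (poschlTellerSol lam om) (poschlTellerSolDeriv lam om t) t := by
  have hc := ((hasDerivAt_id' t).const_mul om).cos
  have hs := ((hasDerivAt_id' t).const_mul om).sin
  have hT := ((hasDerivAt_id' t).const_mul lam).tanh
  refine (((hc.const_mul lam).mul hT).add (hs.const_mul om)).congr_deriv ?_
  unfold poschlTellerSolDeriv
  ring

theorem hasDerivAt_poschlTellerSolDeriv (t : ℝ) :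
    HasDerivAt (poschlTellerSolDeriv lam om)
      (-(om ^ 2 + 2 * lam ^ 2 * (1 - tanh (lam * t) ^ 2)) * poschlTellerSol lam om t) t := by
  have hc := ((hasDerivAt_id' t).const_mul om).cos
  have hs := ((hasDerivAt_id' t).const_mul om).sin
  have hT := ((hasDerivAt_id' t).const_mul lam).tanh
  refine (((hc.const_mul (om ^ 2)).sub ((hs.const_mul (lam * om)).mul hT)).add
    ((hc.const_mul (lam ^ 2)).mul ((hT.fun_pow 2).const_sub 1))).congr_deriv ?_
  unfold poschlTellerSol
  ring

theorem deriv_deriv_poschlTellerSol (t : ℝ) :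
    deriv (deriv (poschlTellerSol lam om)) t
      = -(om ^ 2 + 2 * lam ^ 2 / cosh (lam * t) ^ 2) * poschlTellerSol lam om t := by
  have hderiv : deriv (poschlTellerSol lam om) = poschlTellerSolDeriv lam om :=
    funext fun t => (hasDerivAt_poschlTellerSol t).deriv
  rw [hderiv, (hasDerivAt_poschlTellerSolDeriv t).deriv, one_sub_tanh_sq]
  ring

end PoschlTeller

theorem stmt_4_general (lam om : ℝ)
    (μ : ℝ → ℝ)
    (hμ : ∀ t, μ t =
      (lam * Real.cos (om * t) * Real.sinh (lam * t) + om * Real.sin (om * t) * Real.cosh (lam * t)) /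
      ((om ^ 2 + lam ^ 2) * Real.cosh (lam * t))) :
    ∀ t : ℝ, deriv (deriv μ) t + (om ^ 2 + 2 * lam ^ 2 / Real.cosh (lam * t) ^ 2) * μ t = 0 := by
  have hμ_eq : μ = fun t => (om ^ 2 + lam ^ 2)⁻¹ * poschlTellerSol lam om t := by
    funext t
    have hc := (cosh_pos (lam * t)).ne'
    rw [hμ, poschlTellerSol, tanh_eq_sinh_div_cosh]
    field_simp
  intro t
  rw [hμ_eq, deriv_const_mul_field', deriv_const_mul_field']
  beta_reduce
  rw [deriv_deriv_poschlTellerSol]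
  ring

theorem stmt_4 (lam om : ℝ) (h : om ^ 2 + lam ^ 2 ≠ 0)
    (μ : ℝ → ℝ)
    (hμ : ∀ t, μ t =
      (lam * Real.cos (om * t) * Real.sinh (lam * t) + om * Real.sin (om * t) * Real.cosh (lam * t)) /
      ((om ^ 2 + lam ^ 2) * Real.cosh (lam * t))) :
    ∀ t : ℝ, deriv (deriv μ) t + (om ^ 2 + 2 * lam ^ 2 / Real.cosh (lam * t) ^ 2) * μ t = 0 :=
  stmt_4_general lam om μ hμ
end

section
/- The functions u(t) = (ω·cos(ωt)·cosh(λt) − λ·sin(ωt)·sinh(λt))/cosh(λt) and v(t) = (ω·sin(ωt)·cosh(λt) + λ·cos(ωt)·sinh(λt))/cosh(λt) both satisfy y'' + (ω² + 2λ²/cosh²(λt))·y = 0, and their Wronskian u·v' − u'·v is identically equal to the constant ω·(ω² + λ²). -/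
open Real

/-!
Both functions are Darboux transforms `y' - σ y` of solutions `y = sin (ω t)`, `y = -cos (ω t)` of
`y'' + ω² y = 0`, where `σ = λ tanh (λ t)` is the logarithmic derivative of `cosh (λ t)`.
Since `cosh (λ t)'' = λ² cosh (λ t)`, `σ` solves the Riccati equation `σ' = λ² - σ²`, and then a direct
computation shows that `y' - σ y` solves `z'' + (ω² + 2 σ') z = 0`, with `2 σ' = 2 λ² / cosh² (λ t)`,
and that the transform multiplies Wronskians by `ω² + λ²`; the Wronskian of the two seeds is `ω`.
-/

theorem hasDerivAt_div_of_second_deriv_eq_sq_mul {κ t : ℝ} {φ φ' : ℝ → ℝ}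
    (hφ : HasDerivAt φ (φ' t) t) (hφ' : HasDerivAt φ' (κ ^ 2 * φ t) t) (h0 : φ t ≠ 0) :
    HasDerivAt (fun t => φ' t / φ t) (κ ^ 2 - (φ' t / φ t) ^ 2) t :=
  (hφ'.div hφ h0).congr_deriv (by field_simp)

def darboux (σ y y' : ℝ → ℝ) (t : ℝ) : ℝ := y' t - σ t * y t

section Darboux

variable {ω κ t : ℝ} {σ y y' : ℝ → ℝ}

theorem hasDerivAt_darboux (hy : HasDerivAt y (y' t) t) (hy' : HasDerivAt y' (-ω ^ 2 * y t) t)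
    (hσ : HasDerivAt σ (κ ^ 2 - σ t ^ 2) t) :
    HasDerivAt (darboux σ y y') (-(ω ^ 2 + κ ^ 2 - σ t ^ 2) * y t - σ t * y' t) t :=
  (hy'.sub (hσ.mul hy)).congr_deriv (by ring)

theorem hasDerivAt_deriv_darboux (hy : HasDerivAt y (y' t) t) (hy' : HasDerivAt y' (-ω ^ 2 * y t) t)
    (hσ : HasDerivAt σ (κ ^ 2 - σ t ^ 2) t) :
    HasDerivAt (fun t => -(ω ^ 2 + κ ^ 2 - σ t ^ 2) * y t - σ t * y' t)
      (-(ω ^ 2 + 2 * (κ ^ 2 - σ t ^ 2)) * darboux σ y y' t) t :=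
  ((((hσ.pow 2).const_sub (ω ^ 2 + κ ^ 2)).neg.mul hy).sub (hσ.mul hy')).congr_deriv
    (by simp only [darboux, Pi.neg_apply, Pi.pow_apply]; ring)

theorem deriv_deriv_darboux_add (hy : ∀ t, HasDerivAt y (y' t) t)
    (hy' : ∀ t, HasDerivAt y' (-ω ^ 2 * y t) t) (hσ : ∀ t, HasDerivAt σ (κ ^ 2 - σ t ^ 2) t) :
    deriv (deriv (darboux σ y y')) t + (ω ^ 2 + 2 * (κ ^ 2 - σ t ^ 2)) * darboux σ y y' t = 0 := by
  have hderiv : deriv (darboux σ y y') = fun t => -(ω ^ 2 + κ ^ 2 - σ t ^ 2) * y t - σ t * y' t :=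
    funext fun t => (hasDerivAt_darboux (hy t) (hy' t) (hσ t)).deriv
  rw [hderiv, (hasDerivAt_deriv_darboux (hy t) (hy' t) (hσ t)).deriv]
  ring

theorem darboux_mul_deriv_sub_deriv_mul {y₁ y₁' y₂ y₂' : ℝ → ℝ}
    (hy₁ : HasDerivAt y₁ (y₁' t) t) (hy₁' : HasDerivAt y₁' (-ω ^ 2 * y₁ t) t)
    (hy₂ : HasDerivAt y₂ (y₂' t) t) (hy₂' : HasDerivAt y₂' (-ω ^ 2 * y₂ t) t)
    (hσ : HasDerivAt σ (κ ^ 2 - σ t ^ 2) t) :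
    darboux σ y₁ y₁' t * deriv (darboux σ y₂ y₂') t - deriv (darboux σ y₁ y₁') t * darboux σ y₂ y₂' t =
      (ω ^ 2 + κ ^ 2) * (y₁ t * y₂' t - y₁' t * y₂ t) := by
  rw [(hasDerivAt_darboux hy₁ hy₁' hσ).deriv, (hasDerivAt_darboux hy₂ hy₂' hσ).deriv, darboux, darboux]
  ring

end Darboux

theorem hasDerivAt_sin_mul (ω t : ℝ) : HasDerivAt (fun t => sin (ω * t)) (ω * cos (ω * t)) t := by
  simpa [mul_comm] using ((hasDerivAt_id t).const_mul ω).sin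

theorem hasDerivAt_cos_mul (ω t : ℝ) : HasDerivAt (fun t => cos (ω * t)) (-(ω * sin (ω * t))) t := by
  simpa [mul_comm] using ((hasDerivAt_id t).const_mul ω).cos

theorem hasDerivAt_sinh_mul (ω t : ℝ) : HasDerivAt (fun t => sinh (ω * t)) (ω * cosh (ω * t)) t := by
  simpa [mul_comm] using ((hasDerivAt_id t).const_mul ω).sinh

theorem hasDerivAt_cosh_mul (ω t : ℝ) : HasDerivAt (fun t => cosh (ω * t)) (ω * sinh (ω * t)) t := by
  simpa [mul_comm] using ((hasDerivAt_id t).const_mul ω).cosh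

theorem stmt_5 (lam om : ℝ)
    (u v : ℝ → ℝ)
    (hu : ∀ t, u t =
      (om * Real.cos (om * t) * Real.cosh (lam * t) - lam * Real.sin (om * t) * Real.sinh (lam * t)) /
        Real.cosh (lam * t))
    (hv : ∀ t, v t =
      (om * Real.sin (om * t) * Real.cosh (lam * t) + lam * Real.cos (om * t) * Real.sinh (lam * t)) /
        Real.cosh (lam * t)) :
    (∀ t : ℝ, deriv (deriv u) t + (om ^ 2 + 2 * lam ^ 2 / Real.cosh (lam * t) ^ 2) * u t = 0) ∧
    (∀ t : ℝ, deriv (deriv v) t + (om ^ 2 + 2 * lam ^ 2 / Real.cosh (lam * t) ^ 2) * v t = 0) ∧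
    (∀ t : ℝ, u t * deriv v t - deriv u t * v t = om * (om ^ 2 + lam ^ 2)) := by
  set σ : ℝ → ℝ := fun t => lam * sinh (lam * t) / cosh (lam * t) with hσ_def
  have hσ (t : ℝ) : HasDerivAt σ (lam ^ 2 - σ t ^ 2) t :=
    hasDerivAt_div_of_second_deriv_eq_sq_mul (hasDerivAt_cosh_mul lam t)
      (((hasDerivAt_sinh_mul lam t).const_mul lam).congr_deriv (by ring)) (cosh_pos _).ne'
  have hω_cos (t : ℝ) : HasDerivAt (fun t => om * cos (om * t)) (-om ^ 2 * sin (om * t)) t :=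
    ((hasDerivAt_cos_mul om t).const_mul om).congr_deriv (by ring)
  have hneg_cos (t : ℝ) : HasDerivAt (fun t => -cos (om * t)) (om * sin (om * t)) t :=
    (hasDerivAt_cos_mul om t).neg.congr_deriv (by ring)
  have hω_sin (t : ℝ) : HasDerivAt (fun t => om * sin (om * t)) (-om ^ 2 * -cos (om * t)) t :=
    ((hasDerivAt_sin_mul om t).const_mul om).congr_deriv (by ring)
  have hu_darboux : u = darboux σ (fun t => sin (om * t)) (fun t => om * cos (om * t)) := by
    ext t
    rw [hu, darboux, hσ_def]
    field_simp [(cosh_pos (lam * t)).ne']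
  have hv_darboux : v = darboux σ (fun t => -cos (om * t)) (fun t => om * sin (om * t)) := by
    ext t
    rw [hv, darboux, hσ_def]
    field_simp [(cosh_pos (lam * t)).ne']
    ring
  have hpotential (t : ℝ) : 2 * lam ^ 2 / cosh (lam * t) ^ 2 = 2 * (lam ^ 2 - σ t ^ 2) := by
    rw [hσ_def]
    field_simp [(cosh_pos (lam * t)).ne']
    linear_combination (-lam ^ 2) * cosh_sq_sub_sinh_sq (lam * t)
  refine ⟨fun t => ?_, fun t => ?_, fun t => ?_⟩
  · rw [hpotential, hu_darboux]
    exact deriv_deriv_darboux_add (hasDerivAt_sin_mul om) hω_cos hσ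
  · rw [hpotential, hv_darboux]
    exact deriv_deriv_darboux_add hneg_cos hω_sin hσ
  · rw [hu_darboux, hv_darboux, darboux_mul_deriv_sub_deriv_mul (hasDerivAt_sin_mul om t) (hω_cos t)
      (hneg_cos t) (hω_sin t) (hσ t)]
    linear_combination (om * (om ^ 2 + lam ^ 2)) * sin_sq_add_cos_sq (om * t)
end

section
/- The function κ(t) = (ω² + λ²·tanh²(λt))^{1/2} satisfies the Ermakov equation κ'' + (ω² + 2λ²/cosh²(λt))·κ = ω²(λ²+ω²)² / κ³ for all real t. -/
/-!
The function `T t = tanh (λ t)` solves the Riccati equation `T' = λ (1 - T²)`, and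
`1 / cosh² (λ t) = 1 - T²`. For any solution of this Riccati equation, `κ = √(ω² + λ² T²)` has
`κ κ' = λ³ T (1 - T²)`; differentiating once more and eliminating `κ² = ω² + λ² T²` turns the
Ermakov equation into a polynomial identity in `T` and `κ`.
-/

open Real

section Riccati

variable {lam om : ℝ} {T : ℝ → ℝ}

theorem hasDerivAt_sqrt_of_riccati (hom : om ≠ 0)
    (hT : ∀ t, HasDerivAt T (lam * (1 - T t ^ 2)) t) (t : ℝ) :
    HasDerivAt (fun s ↦ √(om ^ 2 + lam ^ 2 * T s ^ 2))
      (lam ^ 3 * (T t - T t ^ 3) / √(om ^ 2 + lam ^ 2 * T t ^ 2)) t := by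
  have hpos : 0 < om ^ 2 + lam ^ 2 * T t ^ 2 := by positivity
  convert (((hT t).fun_pow 2).const_mul (lam ^ 2)).const_add (om ^ 2) |>.sqrt hpos.ne' using 1
  field_simp
  push_cast
  ring

theorem hasDerivAt_deriv_sqrt_of_riccati (hom : om ≠ 0)
    (hT : ∀ t, HasDerivAt T (lam * (1 - T t ^ 2)) t) (t : ℝ) :
    HasDerivAt (fun s ↦ lam ^ 3 * (T s - T s ^ 3) / √(om ^ 2 + lam ^ 2 * T s ^ 2))
      (lam ^ 4 * (1 - T t ^ 2) * (1 - 3 * T t ^ 2) / √(om ^ 2 + lam ^ 2 * T t ^ 2)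
        - lam ^ 6 * T t ^ 2 * (1 - T t ^ 2) ^ 2 / √(om ^ 2 + lam ^ 2 * T t ^ 2) ^ 3) t := by
  have hpos : 0 < √(om ^ 2 + lam ^ 2 * T t ^ 2) := by positivity
  refine ((((hT t).fun_sub ((hT t).fun_pow 3)).const_mul (lam ^ 3)).fun_div
    (hasDerivAt_sqrt_of_riccati hom hT t) hpos.ne').congr_deriv ?_
  field_simp
  ring

theorem ermakov_of_riccati (hom : om ≠ 0)
    (hT : ∀ t, HasDerivAt T (lam * (1 - T t ^ 2)) t) (t : ℝ) :
    deriv (deriv fun s ↦ √(om ^ 2 + lam ^ 2 * T s ^ 2)) t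
        + (om ^ 2 + 2 * lam ^ 2 * (1 - T t ^ 2)) * √(om ^ 2 + lam ^ 2 * T t ^ 2) =
      om ^ 2 * (lam ^ 2 + om ^ 2) ^ 2 / √(om ^ 2 + lam ^ 2 * T t ^ 2) ^ 3 := by
  rw [funext fun s ↦ (hasDerivAt_sqrt_of_riccati hom hT s).deriv,
    (hasDerivAt_deriv_sqrt_of_riccati hom hT t).deriv]
  have hpos : 0 < √(om ^ 2 + lam ^ 2 * T t ^ 2) := by positivity
  have hsq : √(om ^ 2 + lam ^ 2 * T t ^ 2) ^ 2 = om ^ 2 + lam ^ 2 * T t ^ 2 := sq_sqrt (by positivity)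
  generalize √(om ^ 2 + lam ^ 2 * T t ^ 2) = S at hpos hsq ⊢
  field_simp
  linear_combination (om ^ 2 * S ^ 2 + om ^ 2 * (om ^ 2 + lam ^ 2 * T t ^ 2)
    + 2 * lam ^ 2 * (1 - T t ^ 2) * (S ^ 2 + om ^ 2 + lam ^ 2 * T t ^ 2)
    + lam ^ 4 * (1 - T t ^ 2) * (1 - 3 * T t ^ 2)) * hsq

end Riccati

theorem stmt_6 (lam om : ℝ) (hom : om ≠ 0)
    (κ : ℝ → ℝ)
    (hκ : ∀ t, κ t = Real.sqrt (om ^ 2 + lam ^ 2 * Real.tanh (lam * t) ^ 2)) :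
    ∀ t : ℝ, deriv (deriv κ) t + (om ^ 2 + 2 * lam ^ 2 / Real.cosh (lam * t) ^ 2) * κ t =
      om ^ 2 * (lam ^ 2 + om ^ 2) ^ 2 / κ t ^ 3 := by
  have hT (t : ℝ) : HasDerivAt (fun s ↦ tanh (lam * s)) (lam * (1 - tanh (lam * t) ^ 2)) t :=
    ((hasDerivAt_tanh (lam * t)).comp t ((hasDerivAt_id t).const_mul lam)).congr_deriv (by ring)
  obtain rfl : κ = fun t ↦ √(om ^ 2 + lam ^ 2 * tanh (lam * t) ^ 2) := funext hκ
  intro t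
  rw [div_eq_mul_one_div (2 * lam ^ 2), ← one_sub_tanh_sq]
  exact ermakov_of_riccati hom hT t
end

section
/- Let ω: ℝ → ℝ be continuous and let u, v be two solutions of y'' + ω(t)²·y = 0 on ℝ with constant Wronskian W = u·v' − u'·v ≠ 0. Let A, B, C be real constants with A·C − B² = c₀/W², and suppose A·u(t)² + 2B·u(t)·v(t) + C·v(t)² > 0 for all t. Then κ(t) = (A·u(t)² + 2B·u(t)·v(t) + C·v(t)²)^{1/2} satisfies the Ermakov equation κ'' + ω(t)²·κ = c₀/κ³. -/
/-!
Put `Q = κ² = A u² + 2B uv + C v²` and let `b` be the symmetric bilinear form with matrix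
`[[A, B], [B, C]]`, so that `Q = b(x, x)` for `x = (u, v)`. Then `Q' = 2 b(x, x')` and, since
`x'' = -ω² x`, `Q'' = 2 b(x', x') - 2 ω² Q`. Hence
`2 Q Q'' - Q'² + 4 ω² Q² = 4 (b(x, x) b(x', x') - b(x, x')²) = 4 (AC - B²) W² = 4 c₀`
by the Lagrange identity for `b`, and differentiating `κ = √Q` twice turns this identity into
`κ'' + ω² κ = c₀ / κ³`.
-/

open Real

namespace Pinney

variable (A B C : ℝ)

def polarForm (x y x' y' : ℝ) : ℝ :=
  A * x * x' + B * (x * y' + y * x') + C * y * y'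

lemma polarForm_self (x y : ℝ) :
    polarForm A B C x y x y = A * x ^ 2 + 2 * B * x * y + C * y ^ 2 := by
  unfold polarForm; ring

lemma polarForm_self_mul_polarForm_self_sub_sq (x y x' y' : ℝ) :
    polarForm A B C x y x y * polarForm A B C x' y' x' y' - polarForm A B C x y x' y' ^ 2
      = (A * C - B ^ 2) * (x * y' - x' * y) ^ 2 := by
  unfold polarForm; ring

lemma hasDerivAt_polarForm {u v p q : ℝ → ℝ} {u' v' p' q' t : ℝ}
    (hu : HasDerivAt u u' t) (hv : HasDerivAt v v' t)
    (hp : HasDerivAt p p' t) (hq : HasDerivAt q q' t) :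
    HasDerivAt (fun s => polarForm A B C (u s) (v s) (p s) (q s))
      (polarForm A B C u' v' (p t) (q t) + polarForm A B C (u t) (v t) p' q') t := by
  refine ((((hu.const_mul A).mul hp).add (((hu.mul hq).add (hv.mul hp)).const_mul B)).add
    ((hv.const_mul C).mul hq)).congr_deriv ?_
  unfold polarForm; ring

lemma hasDerivAt_polarForm_self {u v : ℝ → ℝ} {u' v' t : ℝ}
    (hu : HasDerivAt u u' t) (hv : HasDerivAt v v' t) :
    HasDerivAt (fun s => polarForm A B C (u s) (v s) (u s) (v s))
      (2 * polarForm A B C (u t) (v t) u' v') t := by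
  refine (hasDerivAt_polarForm A B C hu hv hu hv).congr_deriv ?_
  unfold polarForm; ring

/-- With `Q = b(x, x)`, `Q' = 2 b(x, x')`, `Q'' = 2 b(x', x') + 2 b(x, x'')` and `x'' = -w x`. -/
lemma pinney_identity {w x y x' y' x'' y'' : ℝ} (hx : x'' = -w * x) (hy : y'' = -w * y) :
    2 * polarForm A B C x y x y
        * (2 * (polarForm A B C x' y' x' y' + polarForm A B C x y x'' y''))
      - (2 * polarForm A B C x y x' y') ^ 2 + 4 * w * polarForm A B C x y x y ^ 2
      = 4 * ((A * C - B ^ 2) * (x * y' - x' * y) ^ 2) := by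
  rw [← polarForm_self_mul_polarForm_self_sub_sq, hx, hy]
  unfold polarForm; ring

end Pinney

lemma hasDerivAt_deriv_sqrt {f f' : ℝ → ℝ} {f'' t : ℝ} (hf : ∀ s, HasDerivAt f (f' s) s)
    (hpos : ∀ s, 0 < f s) (hf' : HasDerivAt f' f'' t) :
    HasDerivAt (deriv fun s => √(f s)) ((2 * f t * f'' - f' t ^ 2) / (4 * √(f t) ^ 3)) t := by
  have hderiv : deriv (fun s => √(f s)) = fun s => f' s / (2 * √(f s)) :=
    funext fun s => ((hf s).sqrt (hpos s).ne').deriv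
  have hsqrt : 0 < √(f t) := sqrt_pos.mpr (hpos t)
  rw [hderiv]
  refine (hf'.div (((hf t).sqrt (hpos t).ne').const_mul 2) (by positivity)).congr_deriv ?_
  field_simp
  rw [sq_sqrt (hpos t).le]
  ring

lemma ermakov_of_sqrt {Q Q' : ℝ → ℝ} {Q'' t w c : ℝ} (hQ : ∀ s, HasDerivAt Q (Q' s) s)
    (hpos : ∀ s, 0 < Q s) (hQ' : HasDerivAt Q' Q'' t)
    (hid : 2 * Q t * Q'' - Q' t ^ 2 + 4 * w * Q t ^ 2 = 4 * c) :
    deriv (deriv fun s => √(Q s)) t + w * √(Q t) = c / √(Q t) ^ 3 := by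
  have hsqrt : 0 < √(Q t) := sqrt_pos.mpr (hpos t)
  have hsq : √(Q t) ^ 2 = Q t := sq_sqrt (hpos t).le
  rw [(hasDerivAt_deriv_sqrt hQ hpos hQ').deriv]
  field_simp
  linear_combination hid + (4 * w * (√(Q t) ^ 2 + Q t)) * hsq

open Pinney in
theorem stmt_7_general (ω : ℝ → ℝ)
    (u v : ℝ → ℝ) (hu2 : ContDiff ℝ 2 u) (hv2 : ContDiff ℝ 2 v)
    (hu : ∀ t, deriv (deriv u) t + ω t ^ 2 * u t = 0)
    (hv : ∀ t, deriv (deriv v) t + ω t ^ 2 * v t = 0)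
    (W : ℝ) (hW0 : W ≠ 0)
    (hW : ∀ t, u t * deriv v t - deriv u t * v t = W)
    (A B C c₀ : ℝ) (hABC : A * C - B ^ 2 = c₀ / W ^ 2)
    (hpos : ∀ t, A * u t ^ 2 + 2 * B * u t * v t + C * v t ^ 2 > 0)
    (κ : ℝ → ℝ)
    (hκ : ∀ t, κ t = Real.sqrt (A * u t ^ 2 + 2 * B * u t * v t + C * v t ^ 2)) :
    ∀ t : ℝ, deriv (deriv κ) t + ω t ^ 2 * κ t = c₀ / κ t ^ 3 := by
  intro t
  set Q := fun s => polarForm A B C (u s) (v s) (u s) (v s)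
  have hκQ : κ = fun s => √(Q s) := funext fun s => by simp only [Q, hκ, polarForm_self]
  have du s : HasDerivAt u (deriv u s) s := (hu2.differentiable two_ne_zero s).hasDerivAt
  have dv s : HasDerivAt v (deriv v s) s := (hv2.differentiable two_ne_zero s).hasDerivAt
  have ddu : HasDerivAt (deriv u) (deriv (deriv u) t) t :=
    (hu2.differentiable_deriv_two t).hasDerivAt
  have ddv : HasDerivAt (deriv v) (deriv (deriv v) t) t :=
    (hv2.differentiable_deriv_two t).hasDerivAt
  have hc : (A * C - B ^ 2) * W ^ 2 = c₀ := by rw [hABC]; field_simp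
  rw [hκQ]
  refine ermakov_of_sqrt (fun s => hasDerivAt_polarForm_self A B C (du s) (dv s))
    (fun s => by simpa only [Q, polarForm_self] using hpos s)
    ((hasDerivAt_polarForm A B C (du t) (dv t) ddu ddv).const_mul 2) ?_
  rw [pinney_identity A B C (w := ω t ^ 2) (by linarith [hu t]) (by linarith [hv t]), hW, hc]

theorem stmt_7 (ω : ℝ → ℝ) (hω : Continuous ω)
    (u v : ℝ → ℝ) (hu2 : ContDiff ℝ 2 u) (hv2 : ContDiff ℝ 2 v)
    (hu : ∀ t, deriv (deriv u) t + ω t ^ 2 * u t = 0)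
    (hv : ∀ t, deriv (deriv v) t + ω t ^ 2 * v t = 0)
    (W : ℝ) (hW0 : W ≠ 0)
    (hW : ∀ t, u t * deriv v t - deriv u t * v t = W)
    (A B C c₀ : ℝ) (hABC : A * C - B ^ 2 = c₀ / W ^ 2)
    (hpos : ∀ t, A * u t ^ 2 + 2 * B * u t * v t + C * v t ^ 2 > 0)
    (κ : ℝ → ℝ)
    (hκ : ∀ t, κ t = Real.sqrt (A * u t ^ 2 + 2 * B * u t * v t + C * v t ^ 2)) :
    ∀ t : ℝ, deriv (deriv κ) t + ω t ^ 2 * κ t = c₀ / κ t ^ 3 :=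
  stmt_7_general ω u v hu2 hv2 hu hv W hW0 hW A B C c₀ hABC hpos κ hκ
end

section
/- Let ω: ℝ → ℝ be continuously differentiable and suppose A, B, C: ℝ → ℝ satisfy the system A' + 2C = 0, B' − 2ω(t)²·C = 0, C' + B − ω(t)²·A = 0. If A(t) = κ(t)² with κ(t) > 0 twice differentiable, then the function t ↦ κ(t)³·(κ''(t) + ω(t)²·κ(t)) is constant. -/
open Real

/-!
`A B - C ^ 2` is a first integral of the system: its derivative is
`B (A' + 2C) + A (B' - 2ω²C) - 2C (C' + B - ω²A) = 0`. Substituting `A = κ²`, the first equation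
forces `C = -κκ'` and then the third forces `B = κκ'' + κ'² + ω²κ²`, so that the first integral is
`A B - C² = κ³ (κ'' + ω²κ)`.
-/

section LewisRiesenfeld

variable {A B C Ω κ : ℝ → ℝ}

theorem exists_const_mul_sub_sq_of_system
    (hA : Differentiable ℝ A) (hB : Differentiable ℝ B) (hC : Differentiable ℝ C)
    (hsysA : ∀ t, deriv A t + 2 * C t = 0)
    (hsysB : ∀ t, deriv B t - 2 * Ω t * C t = 0)
    (hsysC : ∀ t, deriv C t + B t - Ω t * A t = 0) :
    ∃ c : ℝ, ∀ t, A t * B t - C t ^ 2 = c := by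
  have hderiv : ∀ t, HasDerivAt (fun t => A t * B t - C t ^ 2) 0 t := by
    intro t
    refine (((hA t).hasDerivAt.mul (hB t).hasDerivAt).sub
      ((hC t).hasDerivAt.pow 2)).congr_deriv ?_
    linear_combination B t * hsysA t + A t * hsysB t - 2 * C t * hsysC t
  exact ⟨_, fun t => is_const_of_deriv_eq_zero (fun t => (hderiv t).differentiableAt)
    (fun t => (hderiv t).deriv) t 0⟩

theorem eq_neg_mul_deriv_of_eq_sq (hκ : Differentiable ℝ κ) (hAκ : ∀ t, A t = κ t ^ 2)
    (hsysA : ∀ t, deriv A t + 2 * C t = 0) (t : ℝ) :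
    C t = -(κ t * deriv κ t) := by
  have hA' : deriv A t = 2 * κ t * deriv κ t := by
    rw [funext hAκ, ((hκ t).hasDerivAt.fun_pow 2).deriv]
    ring
  linear_combination hsysA t / 2 - hA' / 2

theorem eq_mul_deriv_deriv_add_of_eq_neg_mul_deriv (hκ : Differentiable ℝ κ) (hκ' : Differentiable ℝ (deriv κ))
    (hC : ∀ t, C t = -(κ t * deriv κ t))
    (hsysC : ∀ t, deriv C t + B t - Ω t * A t = 0) (t : ℝ) :
    B t = κ t * deriv (deriv κ) t + deriv κ t ^ 2 + Ω t * A t := by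
  have hC' : deriv C t = -(deriv κ t ^ 2 + κ t * deriv (deriv κ) t) := by
    rw [funext hC, ((hκ t).hasDerivAt.fun_mul (hκ' t).hasDerivAt).fun_neg.deriv]
    ring
  linear_combination hsysC t - hC'

end LewisRiesenfeld

theorem stmt_8_general (ω : ℝ → ℝ)
    (A B C : ℝ → ℝ)
    (hA : Differentiable ℝ A) (hB : Differentiable ℝ B) (hC : Differentiable ℝ C)
    (hsysA : ∀ t, deriv A t + 2 * C t = 0)
    (hsysB : ∀ t, deriv B t - 2 * ω t ^ 2 * C t = 0)
    (hsysC : ∀ t, deriv C t + B t - ω t ^ 2 * A t = 0)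
    (κ : ℝ → ℝ)
    (hκ1 : Differentiable ℝ κ) (hκ2 : Differentiable ℝ (deriv κ))
    (hAκ : ∀ t, A t = κ t ^ 2) :
    ∃ c : ℝ, ∀ t : ℝ, κ t ^ 3 * (deriv (deriv κ) t + ω t ^ 2 * κ t) = c := by
  obtain ⟨c, hc⟩ := exists_const_mul_sub_sq_of_system (Ω := fun t => ω t ^ 2)
    hA hB hC hsysA hsysB hsysC
  have hCκ := eq_neg_mul_deriv_of_eq_sq hκ1 hAκ hsysA
  refine ⟨c, fun t => ?_⟩
  rw [← hc t, eq_mul_deriv_deriv_add_of_eq_neg_mul_deriv hκ1 hκ2 hCκ hsysC t, hCκ t, hAκ t]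
  ring

theorem stmt_8 (ω : ℝ → ℝ) (hω : ContDiff ℝ 1 ω)
    (A B C : ℝ → ℝ)
    (hA : Differentiable ℝ A) (hB : Differentiable ℝ B) (hC : Differentiable ℝ C)
    (hsysA : ∀ t, deriv A t + 2 * C t = 0)
    (hsysB : ∀ t, deriv B t - 2 * ω t ^ 2 * C t = 0)
    (hsysC : ∀ t, deriv C t + B t - ω t ^ 2 * A t = 0)
    (κ : ℝ → ℝ) (hκpos : ∀ t, κ t > 0)
    (hκ1 : Differentiable ℝ κ) (hκ2 : Differentiable ℝ (deriv κ))
    (hAκ : ∀ t, A t = κ t ^ 2) :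
    ∃ c : ℝ, ∀ t : ℝ, κ t ^ 3 * (deriv (deriv κ) t + ω t ^ 2 * κ t) = c :=
  stmt_8_general ω A B C hA hB hC hsysA hsysB hsysC κ hκ1 hκ2 hAκ
end

section
/- Every solution of the differential equation x'' + 2λ·tanh(λt)·x' + ω₀²·x = 0 on ℝ has the form x(t) = A·sin(ωt + δ)/cosh(λt) for some real constants A and δ, where ω = √(ω₀² − λ²) > 0. -/
/-!
The substitution `y = x · cosh (λt)` removes the damping term: `y'' = (λ² - ω₀²) y = -ω² y`.
A solution `u` of the harmonic oscillator with zero initial data has constant energy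
`u'² + ω² u² = 0`, so every solution is the sine wave `A sin (ωt + δ)` matching its initial data;
dividing by `cosh (λt)` gives the claim.
-/

open Real

section Harmonic

variable {c : ℝ} {u u' : ℝ → ℝ}

theorem harmonic_eq_zero_of_initial (hu : ∀ t, HasDerivAt u (u' t) t)
    (hu' : ∀ t, HasDerivAt u' (-(c ^ 2) * u t) t) (h0 : u 0 = 0) (h0' : u' 0 = 0) (t : ℝ) :
    u t = 0 := by
  have henergy : ∀ s, HasDerivAt (fun s => u' s ^ 2 + c ^ 2 * u s ^ 2) 0 s := fun s => by
    refine (((hu' s).pow 2).add (((hu s).pow 2).const_mul (c ^ 2))).congr_deriv ?_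
    simp only [Nat.cast_ofNat]
    ring
  have hu'_zero : ∀ s, u' s = 0 := fun s => by
    have := is_const_of_deriv_eq_zero (fun s => (henergy s).differentiableAt)
      (fun s => (henergy s).deriv) s 0
    simp only [h0, h0'] at this
    nlinarith [sq_nonneg (u' s), sq_nonneg (c * u s)]
  have := is_const_of_deriv_eq_zero (fun s => (hu s).differentiableAt)
    (fun s => (hu s).deriv.trans (hu'_zero s)) t 0
  rw [this, h0]

theorem exists_mul_sin_eq_and_mul_cos_eq (a b : ℝ) :
    ∃ A δ : ℝ, A * sin δ = a ∧ A * cos δ = b :=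
  ⟨‖(⟨b, a⟩ : ℂ)‖, Complex.arg ⟨b, a⟩, Complex.norm_mul_sin_arg _, Complex.norm_mul_cos_arg _⟩

theorem harmonic_eq_amplitude_phase (hc : c ≠ 0) (hu : ∀ t, HasDerivAt u (u' t) t)
    (hu' : ∀ t, HasDerivAt u' (-(c ^ 2) * u t) t) :
    ∃ A δ : ℝ, ∀ t, u t = A * sin (c * t + δ) := by
  obtain ⟨A, δ, hsin, hcos⟩ := exists_mul_sin_eq_and_mul_cos_eq (u 0) (u' 0 / c)
  have hphase : ∀ t, HasDerivAt (fun t => c * t + δ) c t := fun t => by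
    simpa using ((hasDerivAt_id t).const_mul c).add_const δ
  have hwave : ∀ t, HasDerivAt (fun t => A * sin (c * t + δ)) (A * c * cos (c * t + δ)) t :=
    fun t => ((hphase t).sin.const_mul A).congr_deriv (by ring)
  have hwave' : ∀ t, HasDerivAt (fun t => A * c * cos (c * t + δ))
      (-(c ^ 2) * (A * sin (c * t + δ))) t :=
    fun t => ((hphase t).cos.const_mul (A * c)).congr_deriv (by ring)
  refine ⟨A, δ, fun t => sub_eq_zero.mp ?_⟩
  refine harmonic_eq_zero_of_initial (u := fun t => u t - A * sin (c * t + δ))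
    (fun t => (hu t).sub (hwave t))
    (fun t => ((hu' t).sub (hwave' t)).congr_deriv (by ring)) ?_ ?_ t
  · simp [hsin]
  · simp only [mul_zero, zero_add]
    rw [mul_right_comm, hcos, div_mul_cancel₀ _ hc, sub_self]

end Harmonic

theorem exists_hasDerivAt_cosh_mul_of_tanh_damped {lam k : ℝ} {x x' x'' : ℝ → ℝ}
    (hx : ∀ t, HasDerivAt x (x' t) t) (hx' : ∀ t, HasDerivAt x' (x'' t) t)
    (heq : ∀ t, x'' t + 2 * lam * tanh (lam * t) * x' t + k * x t = 0) :
    ∃ y' : ℝ → ℝ, (∀ t, HasDerivAt (fun t => x t * cosh (lam * t)) (y' t) t) ∧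
      ∀ t, HasDerivAt y' (-(k - lam ^ 2) * (x t * cosh (lam * t))) t := by
  have hlin : ∀ t, HasDerivAt (fun t => lam * t) lam t := fun t => by
    simpa using (hasDerivAt_id t).const_mul lam
  refine ⟨fun t => x' t * cosh (lam * t) + x t * (sinh (lam * t) * lam),
    fun t => (hx t).mul (hlin t).cosh, fun t => ?_⟩
  have hcosh : cosh (lam * t) ≠ 0 := (cosh_pos _).ne'
  have hx''_cosh : x'' t * cosh (lam * t) =
      -2 * lam * sinh (lam * t) * x' t - k * x t * cosh (lam * t) := by
    have h := heq t
    rw [tanh_eq_sinh_div_cosh] at h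
    field_simp at h
    linarith
  have hy' := ((hx' t).mul (hlin t).cosh).add ((hx t).mul ((hlin t).sinh.mul_const lam))
  exact hy'.congr_deriv (by linear_combination hx''_cosh)

theorem stmt_10_general (lam om0 : ℝ) (hfreq : om0 ^ 2 > lam ^ 2)
    (om : ℝ) (hom : om = Real.sqrt (om0 ^ 2 - lam ^ 2))
    (x : ℝ → ℝ) (hx : ContDiff ℝ 2 x)
    (heq : ∀ t, deriv (deriv x) t + 2 * lam * Real.tanh (lam * t) * deriv x t + om0 ^ 2 * x t = 0) :
    ∃ A δ : ℝ, ∀ t : ℝ, x t = A * Real.sin (om * t + δ) / Real.cosh (lam * t) := by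
  have hom_sq : om ^ 2 = om0 ^ 2 - lam ^ 2 := by rw [hom, sq_sqrt (by linarith)]
  have hom_ne : om ≠ 0 := by rw [hom]; exact (sqrt_pos.mpr (by linarith)).ne'
  have hx1 : ∀ t, HasDerivAt x (deriv x t) t :=
    fun t => (hx.differentiable (by norm_num) t).hasDerivAt
  have hx2 : ∀ t, HasDerivAt (deriv x) (deriv (deriv x) t) t :=
    fun t => ((contDiff_succ_iff_deriv (n := 1)).mp hx).2.2.differentiable (by norm_num) t
      |>.hasDerivAt
  obtain ⟨y', hy, hy'⟩ := exists_hasDerivAt_cosh_mul_of_tanh_damped hx1 hx2 heq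
  obtain ⟨A, δ, hAδ⟩ := harmonic_eq_amplitude_phase hom_ne hy (by rwa [hom_sq])
  refine ⟨A, δ, fun t => ?_⟩
  rw [← hAδ t, mul_div_cancel_right₀ _ (cosh_pos _).ne']

theorem stmt_10 (lam om0 : ℝ) (hlam : lam ≠ 0) (hfreq : om0 ^ 2 > lam ^ 2)
    (om : ℝ) (hom : om = Real.sqrt (om0 ^ 2 - lam ^ 2))
    (x : ℝ → ℝ) (hx : ContDiff ℝ 2 x)
    (heq : ∀ t, deriv (deriv x) t + 2 * lam * Real.tanh (lam * t) * deriv x t + om0 ^ 2 * x t = 0) :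
    ∃ A δ : ℝ, ∀ t : ℝ, x t = A * Real.sin (om * t + δ) / Real.cosh (lam * t) :=
  stmt_10_general lam om0 hfreq om hom x hx heq
end

section
/- The functions y₁(t) = ω·tanh(λt+γ)·cos(ωt) − λ·(1 + tanh²(λt+γ))·sin(ωt) and y₂(t) = ω·tanh(λt+γ)·sin(ωt) + λ·(1 + tanh²(λt+γ))·cos(ωt) satisfy the homogeneous equation y'' − (4λ/sinh(2λt+2γ))·y' + (ω² + 2λ²/cosh²(λt+γ))·y = 0 at every t with sinh(2λt+2γ) ≠ 0, and their Wronskian equals ω·(ω² + 4λ²)·tanh²(λt+γ). -/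
/-!
Only the Riccati equation `T' = λ (1 - T²)` of `T t = tanh (λ t + γ)` matters. Since
`4λ / sinh (2u) = 2λ (1 - tanh² u) / tanh u` and `1 / cosh² u = 1 - tanh² u`, the equation
becomes `y'' - 2λ (1 - T²) / T · y' + (ω² + 2λ² (1 - T²)) y = 0`. Both solutions have the
shape `a cos ωt - b sin ωt` with `a`, `b` polynomial in `T`, and so do their derivatives; hence both
claims are polynomial identities in `T`, `cos ωt`, `sin ωt`, the Wronskian one using
`cos² + sin² = 1`.
-/

open Real

theorem Real.sinh_two_mul_eq_tanh (x : ℝ) : sinh (2 * x) = 2 * tanh x * cosh x ^ 2 := by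
  have hc : cosh x ≠ 0 := (cosh_pos x).ne'
  rw [sinh_two_mul, tanh_eq_sinh_div_cosh]
  field_simp

-- At `x = 0` both sides are `0`, through division by zero.
theorem Real.four_mul_div_sinh_two_mul (lam x : ℝ) :
    4 * lam / sinh (2 * x) = 2 * lam * (1 - tanh x ^ 2) / tanh x := by
  rw [sinh_two_mul_eq_tanh, one_sub_tanh_sq]
  ring

theorem hasDerivAt_tanh_mul_add (lam γ t : ℝ) :
    HasDerivAt (fun s => tanh (lam * s + γ)) (lam * (1 - tanh (lam * t + γ) ^ 2)) t := by
  have h := (hasDerivAt_tanh (lam * t + γ)).comp t (((hasDerivAt_id t).const_mul lam).add_const γ)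
  exact h.congr_deriv (by ring)

theorem hasDerivAt_mul_cos_sub_mul_sin {a b : ℝ → ℝ} {a' b' ω t : ℝ}
    (ha : HasDerivAt a a' t) (hb : HasDerivAt b b' t) :
    HasDerivAt (fun s => a s * cos (ω * s) - b s * sin (ω * s))
      ((a' - ω * b t) * cos (ω * t) - (b' + ω * a t) * sin (ω * t)) t := by
  have hω : HasDerivAt (fun s => ω * s) ω t := by simpa using (hasDerivAt_id t).const_mul ω
  refine ((ha.mul hω.cos).sub (hb.mul hω.sin)).congr_deriv ?_
  ring

section Riccati

variable {T : ℝ → ℝ} {ω lam : ℝ}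

noncomputable def waveCos (T : ℝ → ℝ) (ω lam t : ℝ) : ℝ :=
  ω * T t * cos (ω * t) - lam * (1 + T t ^ 2) * sin (ω * t)

noncomputable def waveSin (T : ℝ → ℝ) (ω lam t : ℝ) : ℝ :=
  ω * T t * sin (ω * t) + lam * (1 + T t ^ 2) * cos (ω * t)

theorem hasDerivAt_mul_potential (hT : ∀ t, HasDerivAt T (lam * (1 - T t ^ 2)) t) (t : ℝ) :
    HasDerivAt (fun s => T s * (ω ^ 2 + 2 * lam ^ 2 * (1 - T s ^ 2)))
      (lam * (1 - T t ^ 2) * (ω ^ 2 + 2 * lam ^ 2 - 6 * lam ^ 2 * T t ^ 2)) t := by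
  have hcoeff := ((((hT t).fun_pow 2).const_sub 1).const_mul (2 * lam ^ 2)).const_add (ω ^ 2)
  refine ((hT t).mul hcoeff).congr_deriv ?_
  simp only [Nat.cast_ofNat]
  ring

theorem deriv_waveCos (hT : ∀ t, HasDerivAt T (lam * (1 - T t ^ 2)) t) :
    deriv (waveCos T ω lam) = fun t =>
      -(2 * ω * lam) * T t ^ 2 * cos (ω * t) -
        T t * (ω ^ 2 + 2 * lam ^ 2 * (1 - T t ^ 2)) * sin (ω * t) := by
  funext t
  refine (hasDerivAt_mul_cos_sub_mul_sin ((hT t).const_mul ω)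
    ((((hT t).fun_pow 2).const_add 1).const_mul lam)).deriv.trans ?_
  ring

theorem deriv_waveSin (hT : ∀ t, HasDerivAt T (lam * (1 - T t ^ 2)) t) :
    deriv (waveSin T ω lam) = fun t =>
      T t * (ω ^ 2 + 2 * lam ^ 2 * (1 - T t ^ 2)) * cos (ω * t) -
        2 * ω * lam * T t ^ 2 * sin (ω * t) := by
  have h : waveSin T ω lam =
      fun s => lam * (1 + T s ^ 2) * cos (ω * s) - -ω * T s * sin (ω * s) := by
    funext s; unfold waveSin; ring
  funext t
  rw [h]
  refine (hasDerivAt_mul_cos_sub_mul_sin ((((hT t).fun_pow 2).const_add 1).const_mul lam)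
    ((hT t).const_mul (-ω))).deriv.trans ?_
  ring

theorem waveCos_ode (hT : ∀ t, HasDerivAt T (lam * (1 - T t ^ 2)) t) {t : ℝ} (ht : T t ≠ 0) :
    deriv (deriv (waveCos T ω lam)) t - 2 * lam * (1 - T t ^ 2) / T t * deriv (waveCos T ω lam) t
      + (ω ^ 2 + 2 * lam ^ 2 * (1 - T t ^ 2)) * waveCos T ω lam t = 0 := by
  rw [deriv_waveCos hT, (hasDerivAt_mul_cos_sub_mul_sin
    (((hT t).fun_pow 2).const_mul (-(2 * ω * lam))) (hasDerivAt_mul_potential hT t)).deriv]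
  unfold waveCos
  field_simp
  ring

theorem waveSin_ode (hT : ∀ t, HasDerivAt T (lam * (1 - T t ^ 2)) t) {t : ℝ} (ht : T t ≠ 0) :
    deriv (deriv (waveSin T ω lam)) t - 2 * lam * (1 - T t ^ 2) / T t * deriv (waveSin T ω lam) t
      + (ω ^ 2 + 2 * lam ^ 2 * (1 - T t ^ 2)) * waveSin T ω lam t = 0 := by
  rw [deriv_waveSin hT, (hasDerivAt_mul_cos_sub_mul_sin (hasDerivAt_mul_potential hT t)
    (((hT t).fun_pow 2).const_mul (2 * ω * lam))).deriv]
  unfold waveSin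
  field_simp
  ring

theorem wronskian_waveCos_waveSin (hT : ∀ t, HasDerivAt T (lam * (1 - T t ^ 2)) t) (t : ℝ) :
    waveCos T ω lam t * deriv (waveSin T ω lam) t -
      deriv (waveCos T ω lam) t * waveSin T ω lam t = ω * (ω ^ 2 + 4 * lam ^ 2) * T t ^ 2 := by
  rw [deriv_waveCos hT, deriv_waveSin hT]
  unfold waveCos waveSin
  linear_combination ω * T t ^ 2 * (ω ^ 2 + 4 * lam ^ 2) * sin_sq_add_cos_sq (ω * t)

end Riccati

theorem ode_of_tanh_form {y : ℝ → ℝ} {om lam γ t : ℝ}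
    (h : deriv (deriv y) t -
      2 * lam * (1 - tanh (lam * t + γ) ^ 2) / tanh (lam * t + γ) * deriv y t +
        (om ^ 2 + 2 * lam ^ 2 * (1 - tanh (lam * t + γ) ^ 2)) * y t = 0) :
    deriv (deriv y) t - (4 * lam / sinh (2 * lam * t + 2 * γ)) * deriv y t +
      (om ^ 2 + 2 * lam ^ 2 / cosh (lam * t + γ) ^ 2) * y t = 0 := by
  rwa [show 2 * lam * t + 2 * γ = 2 * (lam * t + γ) by ring, four_mul_div_sinh_two_mul,
    div_eq_mul_one_div (2 * lam ^ 2), ← one_sub_tanh_sq]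

theorem stmt_13 (om lam γ : ℝ)
    (y₁ y₂ : ℝ → ℝ)
    (hy₁ : ∀ t, y₁ t = om * Real.tanh (lam * t + γ) * Real.cos (om * t) -
      lam * (1 + Real.tanh (lam * t + γ) ^ 2) * Real.sin (om * t))
    (hy₂ : ∀ t, y₂ t = om * Real.tanh (lam * t + γ) * Real.sin (om * t) +
      lam * (1 + Real.tanh (lam * t + γ) ^ 2) * Real.cos (om * t)) :
    (∀ t : ℝ, Real.sinh (2 * lam * t + 2 * γ) ≠ 0 →
      deriv (deriv y₁) t - (4 * lam / Real.sinh (2 * lam * t + 2 * γ)) * deriv y₁ t +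
        (om ^ 2 + 2 * lam ^ 2 / Real.cosh (lam * t + γ) ^ 2) * y₁ t = 0) ∧
    (∀ t : ℝ, Real.sinh (2 * lam * t + 2 * γ) ≠ 0 →
      deriv (deriv y₂) t - (4 * lam / Real.sinh (2 * lam * t + 2 * γ)) * deriv y₂ t +
        (om ^ 2 + 2 * lam ^ 2 / Real.cosh (lam * t + γ) ^ 2) * y₂ t = 0) ∧
    (∀ t : ℝ, y₁ t * deriv y₂ t - deriv y₁ t * y₂ t =
      om * (om ^ 2 + 4 * lam ^ 2) * Real.tanh (lam * t + γ) ^ 2) := by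
  have hT := hasDerivAt_tanh_mul_add lam γ
  obtain rfl : y₁ = waveCos (fun s => tanh (lam * s + γ)) om lam := funext hy₁
  obtain rfl : y₂ = waveSin (fun s => tanh (lam * s + γ)) om lam := funext hy₂
  have hT0 (t : ℝ) (ht : sinh (2 * lam * t + 2 * γ) ≠ 0) : tanh (lam * t + γ) ≠ 0 :=
    fun h0 => by
      rw [show 2 * lam * t + 2 * γ = 2 * (lam * t + γ) by ring, sinh_two_mul_eq_tanh, h0] at ht
      simp at ht
  exact ⟨fun t ht => ode_of_tanh_form (waveCos_ode hT (hT0 t ht)),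
    fun t ht => ode_of_tanh_form (waveSin_ode hT (hT0 t ht)), wronskian_waveCos_waveSin hT⟩
end

section
/- The function Y(t) = (1/ω²)·(1 − 2λ²/((ω² + 4λ²)·cosh²(λt+γ))) satisfies Y'' − (4λ/sinh(2λt+2γ))·Y' + (ω² + 2λ²/cosh²(λt+γ))·Y = 1 at every t with sinh(2λt+2γ) ≠ 0. -/
open Real

/-!
Write `u = λt + γ` and `Y = 1/ω² - C sech² u` with `C = 2λ² / (ω² (ω² + 4λ²))`. Then
`Y' = 2Cλ sinh u / cosh³ u` and `Y'' = 2Cλ² (1 - 2 sinh² u) / cosh⁴ u`. Since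
`sinh 2u = 2 sinh u cosh u`, the damping term has no `sinh u` left, the `cosh⁻⁴ u` terms
collapse to `-4Cλ² / cosh² u` by `cosh² u = 1 + sinh² u`, and the remaining `cosh⁻² u` terms
cancel because `C (ω² + 4λ²) = 2λ² / ω²`.
-/

lemma hasDerivAt_affine (a b t : ℝ) : HasDerivAt (fun s => a * s + b) a t := by
  simpa using ((hasDerivAt_id t).const_mul a).add_const b

lemma hasDerivAt_inv_cosh_affine_sq (a b t : ℝ) :
    HasDerivAt (fun s => (cosh (a * s + b) ^ 2)⁻¹)
      (-(2 * a * sinh (a * t + b) / cosh (a * t + b) ^ 3)) t := by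
  have hc := (cosh_pos (a * t + b)).ne'
  refine (((hasDerivAt_affine a b t).cosh.fun_pow 2).fun_inv (pow_ne_zero 2 hc)).congr_deriv ?_
  field_simp
  ring

lemma hasDerivAt_sinh_div_cosh_affine_pow_three (a b t : ℝ) :
    HasDerivAt (fun s => sinh (a * s + b) / cosh (a * s + b) ^ 3)
      (a * (1 - 2 * sinh (a * t + b) ^ 2) / cosh (a * t + b) ^ 4) t := by
  have hc := (cosh_pos (a * t + b)).ne'
  refine ((hasDerivAt_affine a b t).sinh.fun_div ((hasDerivAt_affine a b t).cosh.fun_pow 3)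
    (pow_ne_zero 3 hc)).congr_deriv ?_
  field_simp
  linear_combination a * cosh (a * t + b) ^ 2 * cosh_sq (a * t + b)

theorem stmt_14_general (om lam γ : ℝ) (hom : om ≠ 0)
    (Y : ℝ → ℝ)
    (hY : ∀ t, Y t = (1 / om ^ 2) *
      (1 - 2 * lam ^ 2 / ((om ^ 2 + 4 * lam ^ 2) * Real.cosh (lam * t + γ) ^ 2))) :
    ∀ t : ℝ, Real.sinh (2 * lam * t + 2 * γ) ≠ 0 →
      deriv (deriv Y) t - (4 * lam / Real.sinh (2 * lam * t + 2 * γ)) * deriv Y t +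
        (om ^ 2 + 2 * lam ^ 2 / Real.cosh (lam * t + γ) ^ 2) * Y t = 1 := by
  intro t ht
  have hden : om ^ 2 + 4 * lam ^ 2 ≠ 0 := by positivity
  set C := 2 * lam ^ 2 / (om ^ 2 * (om ^ 2 + 4 * lam ^ 2)) with hC
  have hY_eq : Y = fun s => 1 / om ^ 2 - C * (cosh (lam * s + γ) ^ 2)⁻¹ := by
    funext s
    rw [hY, hC]
    field_simp
  have hY' : deriv Y = fun s => 2 * C * lam * (sinh (lam * s + γ) / cosh (lam * s + γ) ^ 3) := by
    funext s
    rw [hY_eq, (((hasDerivAt_inv_cosh_affine_sq lam γ s).const_mul C).const_sub _).deriv]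
    ring
  have hY'' : deriv (deriv Y) t =
      2 * C * lam * (lam * (1 - 2 * sinh (lam * t + γ) ^ 2) / cosh (lam * t + γ) ^ 4) := by
    rw [hY']
    exact ((hasDerivAt_sinh_div_cosh_affine_pow_three lam γ t).const_mul _).deriv
  rw [show 2 * lam * t + 2 * γ = 2 * (lam * t + γ) by ring, sinh_two_mul] at ht ⊢
  have hs : sinh (lam * t + γ) ≠ 0 := fun h => ht (by rw [h]; ring)
  have hc := (cosh_pos (lam * t + γ)).ne'
  rw [hY'', hY', hY t, hC]
  field_simp
  linear_combination 8 * lam ^ 4 * cosh_sq (lam * t + γ)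

theorem stmt_14 (om lam γ : ℝ) (hom : om ≠ 0) (h2 : om ^ 2 + 4 * lam ^ 2 ≠ 0)
    (Y : ℝ → ℝ)
    (hY : ∀ t, Y t = (1 / om ^ 2) *
      (1 - 2 * lam ^ 2 / ((om ^ 2 + 4 * lam ^ 2) * Real.cosh (lam * t + γ) ^ 2))) :
    ∀ t : ℝ, Real.sinh (2 * lam * t + 2 * γ) ≠ 0 →
      deriv (deriv Y) t - (4 * lam / Real.sinh (2 * lam * t + 2 * γ)) * deriv Y t +
        (om ^ 2 + 2 * lam ^ 2 / Real.cosh (lam * t + γ) ^ 2) * Y t = 1 :=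
  stmt_14_general om lam γ hom Y hY
end
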